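/- arXiv:2402.13461 — 2 statements merged into one kernel-verified Lean document; each statement's English description precedes it below -/
import Mathlib

section
/- Under the setting above, for all x, y ∈ ℝⁿ: ((−m⁴μ + μ − λm²)/(λμm))‖x − y‖² ≤ ⟨∇Φ_{λ,μ}(x) − ∇Φ_{λ,μ}(y), x − y⟩ ≤ ((λm⁴ + μm² − λ)/(λμm))‖x − y‖². -/
open Matrix

/-- The quadratic form `uᵀ D u` on Euclidean space, i.e. `‖u‖²_D`. -/
def quadD {n : ℕ} (D : Matrix (Fin n) (Fin n) ℝ) (u : EuclideanSpace ℝ (Fin n)) : ℝ :=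
  (WithLp.equiv 2 (Fin n → ℝ) u) ⬝ᵥ D.mulVec (WithLp.equiv 2 (Fin n → ℝ) u)

/-- `D * u` as a vector of Euclidean space. -/
noncomputable def mulVecE {n : ℕ} (D : Matrix (Fin n) (Fin n) ℝ)
    (u : EuclideanSpace ℝ (Fin n)) : EuclideanSpace ℝ (Fin n) :=
  (WithLp.equiv 2 (Fin n → ℝ)).symm (D.mulVec (WithLp.equiv 2 (Fin n → ℝ) u))

/-!
Write `d = x - y` and, for a proximal map `p` in the metric of `T`,
`e = (x - p x) - (y - p y)`. Adding the variational inequalities of the prox at `x` and at `y`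
gives `⟪T e, d - e⟫ ≥ 0`, and with positivity of `T` this pins `⟪T e, d⟫` between `0` and
`⟪T d, d⟫ ≤ m ‖d‖²`. Since `⟪∇Φ x - ∇Φ y, d⟫ = ⟪T₁ e₁, d⟫ / λ - ⟪T₂ e₂, d⟫ / μ`, it lies in
`[-m ‖d‖² / μ, m ‖d‖² / λ]`, and for `m ≥ 1` this interval is inside the claimed one.
-/

open Set Filter Topology
open scoped RealInnerProductSpace

section ProxMap

variable {E : Type*} [NormedAddCommGroup E] [InnerProductSpace ℝ E]

def IsProxMap (T : E →ₗ[ℝ] E) (lam : ℝ) (g : E → ℝ) (p : E → E) : Prop :=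
  ∀ x w, g (p x) + ⟪T (p x - x), p x - x⟫ / (2 * lam) ≤ g w + ⟪T (w - x), w - x⟫ / (2 * lam)

theorem LinearMap.IsSymmetric.inner_map_add_smul_self {T : E →ₗ[ℝ] E} (hT : T.IsSymmetric)
    (u v : E) (t : ℝ) :
    ⟪T (u + t • v), u + t • v⟫ = ⟪T u, u⟫ + 2 * t * ⟪T u, v⟫ + t ^ 2 * ⟪T v, v⟫ := by
  simp only [map_add, map_smul, inner_add_left, inner_add_right, real_inner_smul_left,
    real_inner_smul_right, hT v u, real_inner_comm (T u) v]
  ring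

theorem nonneg_of_forall_mem_Ioc_nonneg_add_mul {C K : ℝ}
    (h : ∀ t ∈ Ioc (0 : ℝ) 1, 0 ≤ C + t * K) : 0 ≤ C := by
  have hlim : Tendsto (fun t : ℝ => C + t * K) (𝓝[>] 0) (𝓝 (C + 0 * K)) :=
    ((continuous_const.add (continuous_id.mul continuous_const)).tendsto 0).mono_left
      nhdsWithin_le_nhds
  rw [zero_mul, add_zero] at hlim
  exact ge_of_tendsto hlim (eventually_of_mem (Ioc_mem_nhdsGT one_pos) h)

namespace IsProxMap

variable {T : E →ₗ[ℝ] E} {lam : ℝ} {g : E → ℝ} {p : E → E}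

theorem inner_le (hp : IsProxMap T lam g p) (hT : T.IsSymmetric) (hlam : 0 < lam)
    (hg : ConvexOn ℝ univ g) (x z : E) :
    ⟪T (x - p x), z - p x⟫ ≤ lam * (g z - g (p x)) := by
  -- compare `p x` with the points `p x + t • (z - p x)`, `0 < t ≤ 1`, and let `t → 0⁺`
  have hC : 0 ≤ g z - g (p x) + ⟪T (p x - x), z - p x⟫ / lam := by
    refine nonneg_of_forall_mem_Ioc_nonneg_add_mul (K := ⟪T (z - p x), z - p x⟫ / (2 * lam)) ?_
    rintro t ⟨ht0, ht1⟩
    have hconv : g (p x + t • (z - p x)) ≤ (1 - t) * g (p x) + t * g z := by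
      rw [show p x + t • (z - p x) = (1 - t) • p x + t • z by
        simp only [smul_sub, sub_smul, one_smul]; abel]
      exact hg.2 (mem_univ _) (mem_univ _) (by linarith) ht0.le (by ring)
    have hmin := hp x (p x + t • (z - p x))
    rw [show p x + t • (z - p x) - x = (p x - x) + t • (z - p x) by abel,
      hT.inner_map_add_smul_self] at hmin
    refine nonneg_of_mul_nonneg_right ?_ ht0
    field_simp
    field_simp at hmin
    nlinarith
  have hneg : ⟪T (x - p x), z - p x⟫ = -⟪T (p x - x), z - p x⟫ := by
    rw [← inner_neg_left, ← map_neg, neg_sub]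
  rw [hneg]
  field_simp at hC
  linarith

theorem inner_sub_sub_nonneg (hp : IsProxMap T lam g p) (hT : T.IsSymmetric) (hlam : 0 < lam)
    (hg : ConvexOn ℝ univ g) (x y : E) :
    0 ≤ ⟪T ((x - y) - (p x - p y)), p x - p y⟫ := by
  have hx := hp.inner_le hT hlam hg x (p y)
  have hy := hp.inner_le hT hlam hg y (p x)
  have : ⟪T ((x - y) - (p x - p y)), p x - p y⟫ =
      -(⟪T (x - p x), p y - p x⟫ + ⟪T (y - p y), p x - p y⟫) := by
    rw [show (x - y) - (p x - p y) = (x - p x) - (y - p y) by abel, ← neg_sub (p x) (p y),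
      map_sub, inner_sub_left, inner_neg_right]
    ring
  linarith

end IsProxMap

theorem LinearMap.IsPositive.inner_map_sub_mem_Icc {T : E →ₗ[ℝ] E} (hT : T.IsPositive) {d a : E}
    (h : 0 ≤ ⟪T (d - a), a⟫) : ⟪T (d - a), d⟫ ∈ Icc 0 ⟪T d, d⟫ := by
  have hd : ⟪T (d - a), d⟫ = ⟪T (d - a), d - a⟫ + ⟪T (d - a), a⟫ := by
    rw [← inner_add_right, sub_add_cancel]
  have hsymm : ⟪T (d - a), a⟫ = ⟪T a, d⟫ - ⟪T a, a⟫ := by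
    rw [hT.1, real_inner_comm, inner_sub_right]
  constructor
  · linarith [hT.inner_nonneg_left (d - a)]
  · rw [map_sub, inner_sub_left] at hd ⊢
    linarith [hT.inner_nonneg_left a]

theorem IsProxMap.inner_sub_mem_Icc {T : E →ₗ[ℝ] E} {lam : ℝ} {g : E → ℝ} {p : E → E}
    (hp : IsProxMap T lam g p) (hT : T.IsPositive) (hlam : 0 < lam) (hg : ConvexOn ℝ univ g)
    (x y : E) : ⟪T ((x - p x) - (y - p y)), x - y⟫ ∈ Icc 0 ⟪T (x - y), x - y⟫ := by
  have := hT.inner_map_sub_mem_Icc (hp.inner_sub_sub_nonneg hT.1 hlam hg x y)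
  rwa [show (x - y) - (p x - p y) = (x - p x) - (y - p y) by abel] at this

end ProxMap

section Matrix

variable {n : ℕ}

theorem mulVecE_eq_toEuclideanLin (D : Matrix (Fin n) (Fin n) ℝ) :
    mulVecE D = D.toEuclideanLin :=
  rfl

theorem quadD_eq_inner (D : Matrix (Fin n) (Fin n) ℝ) (u : EuclideanSpace ℝ (Fin n)) :
    quadD D u = ⟪D.toEuclideanLin u, u⟫ := by
  simp [quadD, EuclideanSpace.inner_eq_star_dotProduct]

open scoped MatrixOrder in
theorem Matrix.IsHermitian.inner_toEuclideanLin_le {D : Matrix (Fin n) (Fin n) ℝ}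
    (hD : D.IsHermitian) {c : ℝ} (h : ∀ i, hD.eigenvalues i ≤ c) (u : EuclideanSpace ℝ (Fin n)) :
    ⟪D.toEuclideanLin u, u⟫ ≤ c * ‖u‖ ^ 2 := by
  have hle : D ≤ algebraMap ℝ _ c := by
    refine le_algebraMap_of_spectrum_le ?_ hD.isSelfAdjoint
    rw [hD.spectrum_real_eq_range_eigenvalues]
    rintro _ ⟨i, rfl⟩
    exact h i
  have := (isPositive_toEuclideanLin_iff.mpr (le_iff.mp hle)).inner_nonneg_left u
  simpa [inner_sub_left, Algebra.algebraMap_eq_smul_one, real_inner_smul_left,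
    real_inner_self_eq_norm_sq] using this

theorem inner_mulVecE_sub_prox_mem_Icc {D : Matrix (Fin n) (Fin n) ℝ} (hD : D.PosDef) {m : ℝ}
    (heig : ∀ i, hD.1.eigenvalues i ≤ m) {lam : ℝ} (hlam : 0 < lam)
    {g : EuclideanSpace ℝ (Fin n) → ℝ} (hg : ConvexOn ℝ univ g)
    {p : EuclideanSpace ℝ (Fin n) → EuclideanSpace ℝ (Fin n)}
    (hp : ∀ x w, g (p x) + quadD D (p x - x) / (2 * lam) ≤ g w + quadD D (w - x) / (2 * lam))
    (x y : EuclideanSpace ℝ (Fin n)) :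
    ⟪mulVecE D (x - p x) - mulVecE D (y - p y), x - y⟫ ∈ Icc 0 (m * ‖x - y‖ ^ 2) := by
  have hprox : IsProxMap D.toEuclideanLin lam g p := by
    simpa only [IsProxMap, quadD_eq_inner] using hp
  have := hprox.inner_sub_mem_Icc (isPositive_toEuclideanLin_iff.mpr hD.posSemidef) hlam hg x y
  rw [mulVecE_eq_toEuclideanLin, ← map_sub]
  exact ⟨this.1, this.2.trans (hD.1.inner_toEuclideanLin_le heig _)⟩

end Matrix

theorem stmt_10_general {n : ℕ} (m lam mu : ℝ) (hm : 1 ≤ m) (hlam : 0 < lam) (hmu : 0 < mu)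
    (D₁ D₂ : Matrix (Fin n) (Fin n) ℝ) (hD₁ : D₁.PosDef) (hD₂ : D₂.PosDef)
    (heig₁ : ∀ i, hD₁.1.eigenvalues i ∈ Set.Icc (1/m) m)
    (heig₂ : ∀ i, hD₂.1.eigenvalues i ∈ Set.Icc (1/m) m)
    (g f : EuclideanSpace ℝ (Fin n) → ℝ)
    (hg : ConvexOn ℝ Set.univ g) (hf : ConvexOn ℝ Set.univ f)
    (pg pf : EuclideanSpace ℝ (Fin n) → EuclideanSpace ℝ (Fin n))
    (hpg : ∀ x w, g (pg x) + quadD D₁ (pg x - x) / (2*lam)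
            ≤ g w + quadD D₁ (w - x) / (2*lam))
    (hpf : ∀ x w, f (pf x) + quadD D₂ (pf x - x) / (2*mu)
            ≤ f w + quadD D₂ (w - x) / (2*mu))
    (G : EuclideanSpace ℝ (Fin n) → EuclideanSpace ℝ (Fin n))
    (hG : ∀ x, G x = (1/lam) • mulVecE D₁ (x - pg x) - (1/mu) • mulVecE D₂ (x - pf x)) :
    ∀ x y, ((-(m^4)*mu + mu - lam*m^2)/(lam*mu*m)) * ‖x - y‖^2
        ≤ inner ℝ (G x - G y) (x - y) ∧
      (inner ℝ (G x - G y) (x - y) : ℝ)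
        ≤ ((lam*m^4 + mu*m^2 - lam)/(lam*mu*m)) * ‖x - y‖^2 := by
  intro x y
  obtain ⟨hg₀, hg₁⟩ := inner_mulVecE_sub_prox_mem_Icc hD₁ (fun i => (heig₁ i).2) hlam hg hpg x y
  obtain ⟨hf₀, hf₁⟩ := inner_mulVecE_sub_prox_mem_Icc hD₂ (fun i => (heig₂ i).2) hmu hf hpf x y
  have hinner : ⟪G x - G y, x - y⟫ =
      ⟪mulVecE D₁ (x - pg x) - mulVecE D₁ (y - pg y), x - y⟫ / lam -
        ⟪mulVecE D₂ (x - pf x) - mulVecE D₂ (y - pf y), x - y⟫ / mu := by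
    simp only [hG, inner_sub_left, real_inner_smul_left]
    ring
  have hm4 : 1 ≤ m ^ 4 := one_le_pow₀ hm
  have hden : 0 < lam * mu * m := by positivity
  rw [hinner]
  constructor
  · calc ((-(m^4)*mu + mu - lam*m^2)/(lam*mu*m)) * ‖x - y‖^2 ≤ -(m / mu) * ‖x - y‖^2 := by
          refine mul_le_mul_of_nonneg_right ?_ (sq_nonneg _)
          rw [div_le_iff₀ hden]
          field_simp
          nlinarith
      _ ≤ _ := by
          have := div_le_div_of_nonneg_right hf₁ hmu.le
          have := div_nonneg hg₀ hlam.le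
          linarith [show -(m / mu) * ‖x - y‖ ^ 2 = -(m * ‖x - y‖ ^ 2 / mu) by ring]
  · calc _ ≤ m / lam * ‖x - y‖^2 := by
          have := div_le_div_of_nonneg_right hg₁ hlam.le
          have := div_nonneg hf₀ hmu.le
          linarith [show m / lam * ‖x - y‖ ^ 2 = m * ‖x - y‖ ^ 2 / lam by ring]
      _ ≤ ((lam*m^4 + mu*m^2 - lam)/(lam*mu*m)) * ‖x - y‖^2 := by
          refine mul_le_mul_of_nonneg_right ?_ (sq_nonneg _)
          rw [le_div_iff₀ hden]
          field_simp
          nlinarith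

theorem stmt_10 {n : ℕ} (m lam mu : ℝ) (hm : 1 ≤ m) (hlam : 0 < lam) (hmu : 0 < mu)
    (D₁ D₂ : Matrix (Fin n) (Fin n) ℝ) (hD₁ : D₁.PosDef) (hD₂ : D₂.PosDef)
    (heig₁ : ∀ i, hD₁.1.eigenvalues i ∈ Set.Icc (1/m) m)
    (heig₂ : ∀ i, hD₂.1.eigenvalues i ∈ Set.Icc (1/m) m)
    (g f : EuclideanSpace ℝ (Fin n) → ℝ)
    (hg : ConvexOn ℝ Set.univ g) (hf : ConvexOn ℝ Set.univ f)
    (hglsc : LowerSemicontinuous g) (hflsc : LowerSemicontinuous f)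
    (pg pf : EuclideanSpace ℝ (Fin n) → EuclideanSpace ℝ (Fin n))
    (hpg : ∀ x w, g (pg x) + quadD D₁ (pg x - x) / (2*lam)
            ≤ g w + quadD D₁ (w - x) / (2*lam))
    (hpf : ∀ x w, f (pf x) + quadD D₂ (pf x - x) / (2*mu)
            ≤ f w + quadD D₂ (w - x) / (2*mu))
    (G : EuclideanSpace ℝ (Fin n) → EuclideanSpace ℝ (Fin n))
    (hG : ∀ x, G x = (1/lam) • mulVecE D₁ (x - pg x) - (1/mu) • mulVecE D₂ (x - pf x)) :
    ∀ x y, ((-(m^4)*mu + mu - lam*m^2)/(lam*mu*m)) * ‖x - y‖^2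
        ≤ inner ℝ (G x - G y) (x - y) ∧
      (inner ℝ (G x - G y) (x - y) : ℝ)
        ≤ ((lam*m^4 + mu*m^2 - lam)/(lam*mu*m)) * ‖x - y‖^2 :=
  stmt_10_general m lam mu hm hlam hmu D₁ D₂ hD₁ hD₂ heig₁ heig₂ g f hg hf pg pf hpg hpf G hG
end

section
/- Let F : ℝⁿ → ℝ be differentiable with η-Lipschitz gradient satisfying additionally ⟨∇F(x) − ∇F(y), x − y⟩ ≥ −η₁‖x − y‖² for all x, y. Consider the inertial iteration w_n = x_n + θ_n(x_n − x_{n−1}), x_{n+1} = x_n − (γ/η)∇F(w_n) with 0 < γ < 1 and θ_n ≥ 0. Then F(x_{n+1}) ≤ F(x_n) + (ηθ_n/2 − η/γ + η/2)‖x_{n+1} − x_n‖² + (η₁θ_n² + ηθ_n² + ηθ_n/2)‖x_n − x_{n−1}‖². -/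
open RealInnerProductSpace

/-!
By the descent lemma, `F (x (n+1)) ≤ F (x n) + ⟪F' (x n), s⟫ + η/2 ‖s‖²` with `s = x (n+1) - x n`.
The update gives `F' (w n) = -(η/γ) • s`, so splitting `F' (x n) = (F' (x n) - F' (w n)) + F' (w n)`
and using the Lipschitz bound with `‖x n - w n‖ = θ n ‖x n - x (n-1)‖` leaves
`η θ n ‖x n - x (n-1)‖ ‖s‖ - η/γ ‖s‖²`, and AM-GM on the cross term finishes the estimate.
-/

section
variable {E : Type*} [NormedAddCommGroup E] [InnerProductSpace ℝ E] [CompleteSpace E]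
  {F : E → ℝ} {F' : E → E} {L : ℝ}

theorem HasGradientAt.hasDerivAt_comp_add_smul {g x v : E} {t : ℝ}
    (hF : HasGradientAt F g (x + t • v)) :
    HasDerivAt (fun s : ℝ ↦ F (x + s • v)) ⟪g, v⟫ t := by
  have hline : HasDerivAt (fun s : ℝ ↦ x + s • v) v t := by
    simpa using ((hasDerivAt_id t).smul_const v).const_add x
  have := hF.hasFDerivAt.comp_hasDerivAt t hline
  simp only [Function.comp_def, InnerProductSpace.toDual_apply_apply] at this
  exact this

theorem le_add_inner_add_sq_of_lipschitz_gradient (hF : ∀ x, HasGradientAt F (F' x) x)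
    (hL : ∀ x y, ‖F' x - F' y‖ ≤ L * ‖x - y‖) (x y : E) :
    F y ≤ F x + ⟪F' x, y - x⟫ + L / 2 * ‖y - x‖ ^ 2 := by
  set v := y - x
  -- `g` is antitone on `[0, 1]` since `⟪F' (x + t • v) - F' x, v⟫ ≤ L t ‖v‖²`.
  let g : ℝ → ℝ := fun t ↦ F (x + t • v) - t * ⟪F' x, v⟫ - L / 2 * ‖v‖ ^ 2 * t ^ 2
  have hg : ∀ t, HasDerivAt g (⟪F' (x + t • v) - F' x, v⟫ - L * ‖v‖ ^ 2 * t) t := by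
    intro t
    refine ((((hF (x + t • v)).hasDerivAt_comp_add_smul (x := x)).sub
      ((hasDerivAt_id t).mul_const ⟪F' x, v⟫)).sub
      ((hasDerivAt_pow 2 t).const_mul (L / 2 * ‖v‖ ^ 2))).congr_deriv ?_
    rw [inner_sub_left]
    ring
  have hanti : AntitoneOn g (Set.Icc 0 1) := by
    refine antitoneOn_of_hasDerivWithinAt_nonpos (convex_Icc 0 1)
      (fun t _ ↦ (hg t).continuousAt.continuousWithinAt) (fun t _ ↦ (hg t).hasDerivWithinAt) ?_
    intro t ht
    rw [interior_Icc] at ht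
    have : ⟪F' (x + t • v) - F' x, v⟫ ≤ L * t * ‖v‖ ^ 2 :=
      calc ⟪F' (x + t • v) - F' x, v⟫ ≤ ‖F' (x + t • v) - F' x‖ * ‖v‖ := real_inner_le_norm _ _
        _ ≤ L * ‖x + t • v - x‖ * ‖v‖ := by gcongr; exact hL _ _
        _ = L * t * ‖v‖ ^ 2 := by
          rw [add_sub_cancel_left, norm_smul, Real.norm_of_nonneg ht.1.le]
          ring
    linarith
  have := hanti (by simp) (by simp) zero_le_one
  simp only [g, zero_smul, one_smul, add_zero, add_sub_cancel, v] at this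
  linarith

theorem le_add_of_gradient_step (hF : ∀ x, HasGradientAt F (F' x) x)
    (hL : ∀ x y, ‖F' x - F' y‖ ≤ L * ‖x - y‖) {α : ℝ} (hα : α ≠ 0) {x w x' : E}
    (hx' : x' = x - α • F' w) :
    F x' ≤ F x + L * ‖x - w‖ * ‖x' - x‖ + (L / 2 - α⁻¹) * ‖x' - x‖ ^ 2 := by
  have hFw : F' w = (-α⁻¹) • (x' - x) := by
    rw [hx', sub_sub_cancel_left, smul_neg, neg_smul, neg_neg, smul_smul, inv_mul_cancel₀ hα,
      one_smul]
  have hlin : ⟪F' x - F' w, x' - x⟫ ≤ L * ‖x - w‖ * ‖x' - x‖ :=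
    calc ⟪F' x - F' w, x' - x⟫ ≤ ‖F' x - F' w‖ * ‖x' - x‖ := real_inner_le_norm _ _
      _ ≤ L * ‖x - w‖ * ‖x' - x‖ := by gcongr; exact hL _ _
  have hstep : ⟪F' w, x' - x⟫ = -α⁻¹ * ‖x' - x‖ ^ 2 := by
    rw [hFw, real_inner_smul_left, real_inner_self_eq_norm_sq]
  have := le_add_inner_add_sq_of_lipschitz_gradient hF hL x x'
  rw [← sub_add_cancel (F' x) (F' w), inner_add_left, hstep] at this
  linarith

end

theorem stmt_15_general {d : ℕ} (η η₁ γ : ℝ) (hη : 0 < η) (hη₁ : 0 ≤ η₁)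
    (hγ0 : 0 < γ)
    (F : EuclideanSpace ℝ (Fin d) → ℝ)
    (F' : EuclideanSpace ℝ (Fin d) → EuclideanSpace ℝ (Fin d))
    (hdiff : ∀ x, HasGradientAt F (F' x) x)
    (hlip : ∀ x y, ‖F' x - F' y‖ ≤ η * ‖x - y‖)
    (θ : ℕ → ℝ) (hθ : ∀ n, 0 ≤ θ n ∧ θ n ≤ 1)
    (x w : ℕ → EuclideanSpace ℝ (Fin d))
    (hw : ∀ n, 1 ≤ n → w n = x n + θ n • (x n - x (n-1)))
    (hx : ∀ n, 1 ≤ n → x (n+1) = x n - (γ/η) • F' (w n)) :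
    ∀ n, 1 ≤ n →
      F (x (n+1)) ≤ F (x n)
        + (η * θ n / 2 - η/γ + η/2) * ‖x (n+1) - x n‖^2
        + (η₁ * (θ n)^2 + η * (θ n)^2 + η * θ n / 2) * ‖x n - x (n-1)‖^2 := by
  intro n hn
  have hθn := (hθ n).1
  have hstep := le_add_of_gradient_step hdiff hlip (div_ne_zero hγ0.ne' hη.ne') (hx n hn)
  have hdist : ‖x n - w n‖ = θ n * ‖x n - x (n-1)‖ := by
    rw [hw n hn, sub_add_cancel_left, norm_neg, norm_smul, Real.norm_of_nonneg hθn]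
  rw [hdist, inv_div] at hstep
  have hamgm : 2 * ‖x n - x (n-1)‖ * ‖x (n+1) - x n‖
      ≤ ‖x n - x (n-1)‖ ^ 2 + ‖x (n+1) - x n‖ ^ 2 := two_mul_le_add_sq _ _
  have hslack : 0 ≤ (η₁ + η) * θ n ^ 2 * ‖x n - x (n-1)‖ ^ 2 := by positivity
  nlinarith [mul_le_mul_of_nonneg_left hamgm (by positivity : 0 ≤ η * θ n / 2)]

theorem stmt_15 {d : ℕ} (η η₁ γ : ℝ) (hη : 0 < η) (hη₁ : 0 ≤ η₁)
    (hγ0 : 0 < γ) (hγ1 : γ < 1)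
    (F : EuclideanSpace ℝ (Fin d) → ℝ)
    (F' : EuclideanSpace ℝ (Fin d) → EuclideanSpace ℝ (Fin d))
    (hdiff : ∀ x, HasGradientAt F (F' x) x)
    (hlip : ∀ x y, ‖F' x - F' y‖ ≤ η * ‖x - y‖)
    (hmono : ∀ x y, ⟪F' x - F' y, x - y⟫ ≥ -η₁ * ‖x - y‖^2)
    (θ : ℕ → ℝ) (hθ : ∀ n, 0 ≤ θ n ∧ θ n ≤ 1)
    (x w : ℕ → EuclideanSpace ℝ (Fin d))
    (hw : ∀ n, 1 ≤ n → w n = x n + θ n • (x n - x (n-1)))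
    (hx : ∀ n, 1 ≤ n → x (n+1) = x n - (γ/η) • F' (w n)) :
    ∀ n, 1 ≤ n →
      F (x (n+1)) ≤ F (x n)
        + (η * θ n / 2 - η/γ + η/2) * ‖x (n+1) - x n‖^2
        + (η₁ * (θ n)^2 + η * (θ n)^2 + η * θ n / 2) * ‖x n - x (n-1)‖^2 :=
  stmt_15_general η η₁ γ hη hη₁ hγ0 F F' hdiff hlip θ hθ x w hw hx
end
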